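/- A function p : L^n → L on a bounded chain L is a polynomial function if and only if it is range-idempotent, comonotonic minitive and comonotonic maxitive, i.e., p(c,…,c) = c for every c in the convex hull of the range of p, and for any two comonotonic tuples x, x′ ∈ L^n, p(x ∧ x′) = p(x) ∧ p(x′) and p(x ∨ x′) = p(x) ∨ p(x′). -/

import Mathlib

open Function

/-- A lattice polynomial function on a chain `M`: a member of the smallest set of `n`-ary
functions containing all projections and constants and closed under pointwise `⊓` and `⊔`. -/
inductive IsLatticePolynomial {M : Type*} [LinearOrder M] {n : ℕ} :
    ((Fin n → M) → M) → Prop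
  | proj (i : Fin n) : IsLatticePolynomial fun x => x i
  | const (c : M) : IsLatticePolynomial fun _ => c
  | inf {p q : (Fin n → M) → M} :
      IsLatticePolynomial p → IsLatticePolynomial q →
      IsLatticePolynomial fun x => p x ⊓ q x
  | sup {p q : (Fin n → M) → M} :
      IsLatticePolynomial p → IsLatticePolynomial q →
      IsLatticePolynomial fun x => p x ⊔ q x

/-- A Sugeno integral: an idempotent lattice polynomial function. -/
def IsSugenoIntegral {M : Type*} [LinearOrder M] {n : ℕ} (q : (Fin n → M) → M) : Prop :=
  IsLatticePolynomial q ∧ ∀ c : M, q (fun _ => c) = c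

/-- `φ` satisfies the boundary conditions: `φ 0 ≤ φ x ≤ φ 1` for all `x`. -/
def BoundaryCond {α : Type*} {M : Type*} [LE α] [OrderTop α] [OrderBot α] [Preorder M]
    (φ : α → M) : Prop :=
  ∀ x : α, φ ⊥ ≤ φ x ∧ φ x ≤ φ ⊤

/-- The median of three elements of a lattice. -/
def med {α : Type*} [Lattice α] (a b c : α) : α :=
  (a ⊓ b) ⊔ (a ⊓ c) ⊔ (b ⊓ c)

/-- Two `n`-tuples are comonotonic if some permutation sorts both simultaneously. -/
def Comonotone {M : Type*} [Preorder M] {n : ℕ} (y y' : Fin n → M) : Prop :=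
  ∃ σ : Equiv.Perm (Fin n), Monotone (y ∘ σ) ∧ Monotone (y' ∘ σ)

section PiDefs

variable {n : ℕ} {M : Type*} {L : Fin n → Type*}
variable [∀ i, LinearOrder (L i)] [∀ i, BoundedOrder (L i)]
variable [LinearOrder M] [BoundedOrder M]

/-- A pseudo-polynomial function: composition of a lattice polynomial function with unary
maps satisfying the boundary conditions. -/
def IsPseudoPolynomial (f : (∀ i, L i) → M) : Prop :=
  ∃ (p : (Fin n → M) → M) (φ : ∀ i, L i → M),
    IsLatticePolynomial p ∧ (∀ i, BoundaryCond (φ i)) ∧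
      ∀ x, f x = p fun i => φ i (x i)

/-- A pseudo-Sugeno integral: composition of a Sugeno integral with unary maps satisfying
the boundary conditions. -/
def IsPseudoSugenoIntegral (f : (∀ i, L i) → M) : Prop :=
  ∃ (q : (Fin n → M) → M) (φ : ∀ i, L i → M),
    IsSugenoIntegral q ∧ (∀ i, BoundaryCond (φ i)) ∧
      ∀ x, f x = q fun i => φ i (x i)

/-- A Sugeno utility function: composition of a Sugeno integral with local utility
(order-preserving) functions. -/
def IsSugenoUtility (f : (∀ i, L i) → M) : Prop :=
  ∃ (q : (Fin n → M) → M) (φ : ∀ i, L i → M),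
    IsSugenoIntegral q ∧ (∀ i, Monotone (φ i)) ∧
      ∀ x, f x = q fun i => φ i (x i)

/-- `f` is pseudo-median decomposable w.r.t. the unary maps `φ`. -/
def PseudoMedianDecomp (f : (∀ i, L i) → M) (φ : ∀ i, L i → M) : Prop :=
  ∀ (x : ∀ i, L i) (k : Fin n),
    f x = med (f (update x k ⊥)) (φ k (x k)) (f (update x k ⊤))

/-- `d ∈ φ̄⁻¹(c)`: all components of `d` are mapped to `c` by the corresponding `φ i`. -/
def FiberAll (φ : ∀ i, L i → M) (c : M) (d : ∀ i, L i) : Prop :=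
  ∀ i, φ i (d i) = c

/-- `f` is pseudo-min homogeneous w.r.t. `φ` with common range `R`. -/
def PseudoMinHomog (f : (∀ i, L i) → M) (φ : ∀ i, L i → M) (R : Set M) : Prop :=
  ∀ (x : ∀ i, L i), ∀ c ∈ R, ∀ d : ∀ i, L i, FiberAll φ c d →
    f (fun i => x i ⊓ d i) = f x ⊓ c

/-- `f` is pseudo-max homogeneous w.r.t. `φ` with common range `R`. -/
def PseudoMaxHomog (f : (∀ i, L i) → M) (φ : ∀ i, L i → M) (R : Set M) : Prop :=
  ∀ (x : ∀ i, L i), ∀ c ∈ R, ∀ d : ∀ i, L i, FiberAll φ c d →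
    f (fun i => x i ⊔ d i) = f x ⊔ c

/-- Condition (PI): `f d = c` whenever `d ∈ φ̄⁻¹(c)`, `c ∈ R`. -/
def PseudoPI (f : (∀ i, L i) → M) (φ : ∀ i, L i → M) (R : Set M) : Prop :=
  ∀ c ∈ R, ∀ d : ∀ i, L i, FiberAll φ c d → f d = c

/-- `[x]_d`: the tuple whose `i`th component is `0` if `x i ≤ d i`, and `x i` otherwise. -/
def cutBelow (x d : ∀ i, L i) : ∀ i, L i := fun i => if x i ≤ d i then ⊥ else x i

/-- `[x]^d`: the tuple whose `i`th component is `1` if `x i ≥ d i`, and `x i` otherwise. -/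
def cutAbove (x d : ∀ i, L i) : ∀ i, L i := fun i => if d i ≤ x i then ⊤ else x i

/-- `f` is pseudo-horizontally maxitive w.r.t. `φ` with common range `R`. -/
def PseudoHorizMax (f : (∀ i, L i) → M) (φ : ∀ i, L i → M) (R : Set M) : Prop :=
  ∀ (x : ∀ i, L i), ∀ c ∈ R, ∀ d : ∀ i, L i, FiberAll φ c d →
    f x = f (fun i => x i ⊓ d i) ⊔ f (cutBelow x d)

/-- `f` is pseudo-horizontally minitive w.r.t. `φ` with common range `R`. -/
def PseudoHorizMin (f : (∀ i, L i) → M) (φ : ∀ i, L i → M) (R : Set M) : Prop :=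
  ∀ (x : ∀ i, L i), ∀ c ∈ R, ∀ d : ∀ i, L i, FiberAll φ c d →
    f x = f (fun i => x i ⊔ d i) ⊓ f (cutAbove x d)

/-- `f` is pseudo-comonotonic minitive w.r.t. `φ`. -/
def PseudoComonMin (f : (∀ i, L i) → M) (φ : ∀ i, L i → M) : Prop :=
  ∀ x x' : ∀ i, L i,
    Comonotone (fun i => φ i (x i)) (fun i => φ i (x' i)) →
      f (fun i => x i ⊓ x' i) = f x ⊓ f x'

/-- `f` is pseudo-comonotonic maxitive w.r.t. `φ`. -/
def PseudoComonMax (f : (∀ i, L i) → M) (φ : ∀ i, L i → M) : Prop :=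
  ∀ x x' : ∀ i, L i,
    Comonotone (fun i => φ i (x i)) (fun i => φ i (x' i)) →
      f (fun i => x i ⊔ x' i) = f x ⊔ f x'

/-- The disjunctive normal form polynomial determined by the values of `f` on the
characteristic vectors `e_I`: `y ↦ ⋁_{I ⊆ [n]} (f(e_I) ∧ ⋀_{i ∈ I} y i)`. -/
def qDNF (f : (∀ i, L i) → M) : (Fin n → M) → M :=
  fun y => Finset.univ.sup fun I : Finset (Fin n) =>
    f (fun i => if i ∈ I then ⊤ else ⊥) ⊓ I.inf y

end PiDefs

section ChainDefs

variable {n : ℕ} {M : Type*} [LinearOrder M] [BoundedOrder M]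

/-- The DNF polynomial `y ↦ ⋁_{I ⊆ [n]} (p(e_I) ∧ ⋀_{i ∈ I} y i)` for `p : M^n → M`. -/
def polyDNF (p : (Fin n → M) → M) : (Fin n → M) → M :=
  fun y => Finset.univ.sup fun I : Finset (Fin n) =>
    p (fun i => if i ∈ I then ⊤ else ⊥) ⊓ I.inf y

/-- The convex hull of the range of `p` (in a chain). -/
def clRan (p : (Fin n → M) → M) : Set M :=
  {c : M | ∃ a ∈ Set.range p, ∃ b ∈ Set.range p, a ≤ c ∧ c ≤ b}

/-- Median decomposability of `p : M^n → M`. -/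
def MedianDecomp (p : (Fin n → M) → M) : Prop :=
  ∀ (x : Fin n → M) (k : Fin n),
    p x = med (p (update x k ⊥)) (x k) (p (update x k ⊤))

/-- `S`-min homogeneity: `p(x ∧ c) = p(x) ∧ c` for all `c ∈ S`. -/
def MinHomogOn (p : (Fin n → M) → M) (S : Set M) : Prop :=
  ∀ (x : Fin n → M), ∀ c ∈ S, p (fun i => x i ⊓ c) = p x ⊓ c

/-- `S`-max homogeneity: `p(x ∨ c) = p(x) ∨ c` for all `c ∈ S`. -/
def MaxHomogOn (p : (Fin n → M) → M) (S : Set M) : Prop :=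
  ∀ (x : Fin n → M), ∀ c ∈ S, p (fun i => x i ⊔ c) = p x ⊔ c

/-- Range-idempotence: `p(c,…,c) = c` for every `c` in the convex hull of the range. -/
def RangeIdempotent (p : (Fin n → M) → M) : Prop :=
  ∀ c ∈ clRan p, p (fun _ => c) = c

/-- Horizontal minitivity: `p(x) = p(x ∨ c) ∧ p([x]^c)`. -/
def HorizMin (p : (Fin n → M) → M) : Prop :=
  ∀ (x : Fin n → M) (c : M),
    p x = p (fun i => x i ⊔ c) ⊓ p (fun i => if c ≤ x i then ⊤ else x i)

/-- Horizontal maxitivity: `p(x) = p(x ∧ c) ∨ p([x]_c)`. -/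
def HorizMax (p : (Fin n → M) → M) : Prop :=
  ∀ (x : Fin n → M) (c : M),
    p x = p (fun i => x i ⊓ c) ⊔ p (fun i => if x i ≤ c then ⊥ else x i)

end ChainDefs

/-!
On the cone of tuples sorted by a permutation `σ`, a lattice polynomial function `p` agrees with
`x ↦ p ⊥ ⊔ ⨆ₖ p (e k) ⊓ x (σ k)`, where `e k` is the characteristic vector of `{σ j | k ≤ j}`;
the coefficients `p (e k)` are antitone in `k`, which is what makes this form closed under `⊓`.
Two comonotonic tuples lie in a common cone, where the form is visibly comonotonic minitive and
maxitive, and range-idempotent.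

Conversely, a sorted tuple is the join of the pairwise comonotonic tuples `x (σ k) ⊓ e k`, and on
constants range-idempotence gives `p c = p ⊥ ⊔ c ⊓ p ⊤`; this forces the same form. A function of
this form is determined by its values on characteristic vectors, so it coincides with its
disjunctive normal form, which is a polynomial.
-/

section FinsetSup

variable {ι α : Type*} [LinearOrder ι] [DistribLattice α] [OrderBot α] (s : Finset ι)

theorem sup_finset_sup_inf_sup_finset_sup_of_antitone {a b y : ι → α} {a₀ b₀ : α}
    (ha : Antitone a) (hb : Antitone b) (ha₀ : ∀ k, a₀ ≤ a k) (hb₀ : ∀ k, b₀ ≤ b k) :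
    (a₀ ⊔ s.sup fun k => a k ⊓ y k) ⊓ (b₀ ⊔ s.sup fun k => b k ⊓ y k) =
      a₀ ⊓ b₀ ⊔ s.sup fun k => a k ⊓ b k ⊓ y k := by
  refine le_antisymm ?_ <| sup_le (inf_le_inf le_sup_left le_sup_left) <|
    Finset.sup_le fun k hk => le_inf ?_ ?_
  · have le_term {t : α} {k} (hk : k ∈ s) (h : t ≤ a k ⊓ b k ⊓ y k) :
        t ≤ a₀ ⊓ b₀ ⊔ s.sup fun k => a k ⊓ b k ⊓ y k :=
      le_sup_of_le_right (Finset.le_sup_of_le hk h)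
    simp only [inf_sup_left, inf_sup_right, Finset.sup_inf_distrib_left,
      Finset.sup_inf_distrib_right, sup_le_iff, Finset.sup_le_iff]
    refine ⟨⟨le_sup_left, fun k hk => le_term hk ?_⟩, fun j hj => ⟨le_term hj ?_, fun k hk => ?_⟩⟩
    · exact (inf_le_inf_left _ (hb₀ k)).trans_eq (inf_right_comm _ _ _)
    · exact (inf_le_inf_right _ (ha₀ j)).trans_eq (inf_assoc _ _ _).symm
    · rcases le_total k j with hkj | hjk
      · refine le_term hk ((inf_le_inf_left _ (inf_le_left.trans (hb hkj))).trans_eq ?_)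
        exact inf_right_comm _ _ _
      · refine le_term hj ((inf_le_inf_right _ (inf_le_left.trans (ha hjk))).trans_eq ?_)
        exact (inf_assoc _ _ _).symm
  · exact le_sup_of_le_right (Finset.le_sup_of_le hk (inf_le_inf_right _ inf_le_left))
  · exact le_sup_of_le_right (Finset.le_sup_of_le hk (inf_le_inf_right _ inf_le_right))

theorem sup_finset_sup_inf_sup_finset_sup_of_monotone (a₀ : α) (a : ι → α) {y y' : ι → α}
    (hy : Monotone y) (hy' : Monotone y') :
    (a₀ ⊔ s.sup fun k => a k ⊓ y k) ⊓ (a₀ ⊔ s.sup fun k => a k ⊓ y' k) =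
      a₀ ⊔ s.sup fun k => a k ⊓ (y k ⊓ y' k) := by
  rw [← sup_inf_left]
  congr 1
  refine le_antisymm ?_ <| Finset.sup_le fun k hk => le_inf ?_ ?_
  · simp only [Finset.sup_inf_distrib_left, Finset.sup_inf_distrib_right, Finset.sup_le_iff]
    intro j hj k hk
    rcases le_total k j with hkj | hjk
    · refine Finset.le_sup_of_le hj ((inf_le_inf_right _ (inf_le_right.trans (hy hkj))).trans_eq ?_)
      exact inf_left_comm _ _ _
    · refine Finset.le_sup_of_le hk ((inf_le_inf_left _ (inf_le_right.trans (hy' hjk))).trans_eq ?_)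
      exact inf_assoc _ _ _
  · exact Finset.le_sup_of_le hk (inf_le_inf_left _ inf_le_left)
  · exact Finset.le_sup_of_le hk (inf_le_inf_left _ inf_le_right)

end FinsetSup

section Comonotone

variable {n : ℕ} {M : Type*} [LinearOrder M]

theorem comonotone_const_left (c : M) (y : Fin n → M) : Comonotone (fun _ => c) y :=
  ⟨Tuple.sort y, monotone_const, Tuple.monotone_sort y⟩

theorem comonotone_const_right (y : Fin n → M) (c : M) : Comonotone y (fun _ => c) :=
  ⟨Tuple.sort y, Tuple.monotone_sort y, monotone_const⟩

theorem comonotone_of_forall_lt_imp_le {y y' : Fin n → M}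
    (h : ∀ i j, y i < y j → y' i ≤ y' j) : Comonotone y y' := by
  refine ⟨Tuple.sort fun i => toLex (y i, y' i), fun a b hab => ?_, fun a b hab => ?_⟩ <;>
  rcases Prod.Lex.le_iff.1 (Tuple.monotone_sort (fun i => toLex (y i, y' i)) hab) with
    hlt | ⟨heq, hle⟩
  exacts [hlt.le, heq.le, h _ _ hlt, hle]

def ComonotoneMinitive (p : (Fin n → M) → M) : Prop :=
  ∀ x x', Comonotone x x' → p (x ⊓ x') = p x ⊓ p x'

def ComonotoneMaxitive (p : (Fin n → M) → M) : Prop :=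
  ∀ x x', Comonotone x x' → p (x ⊔ x') = p x ⊔ p x'

theorem ComonotoneMinitive.apply_le_apply {p : (Fin n → M) → M} (hmin : ComonotoneMinitive p)
    {y y' : Fin n → M} (hc : Comonotone y y') (h : y ≤ y') : p y ≤ p y' := by
  calc p y = p (y ⊓ y') := by rw [inf_eq_left.2 h]
    _ = p y ⊓ p y' := hmin y y' hc
    _ ≤ p y' := inf_le_right

end Comonotone

section SortedForm

open Finset

variable {n : ℕ} {M : Type*} [LinearOrder M] [BoundedOrder M]

def finsetIndicator (s : Finset (Fin n)) : Fin n → M := fun i => if i ∈ s then ⊤ else ⊥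

theorem finsetIndicator_empty : (finsetIndicator ∅ : Fin n → M) = ⊥ := by
  funext i
  simp [finsetIndicator]

theorem finsetIndicator_mono {s t : Finset (Fin n)} (hst : s ⊆ t) :
    (finsetIndicator s : Fin n → M) ≤ finsetIndicator t := by
  intro i
  by_cases hi : i ∈ s
  · simp [finsetIndicator, hi, hst hi]
  · simp [finsetIndicator, hi]

theorem comonotone_finsetIndicator_of_subset {s t : Finset (Fin n)} (hst : s ⊆ t) :
    Comonotone (finsetIndicator s : Fin n → M) (finsetIndicator t) := by
  refine comonotone_of_forall_lt_imp_le fun i j hij => ?_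
  have hj : j ∈ s := by
    by_contra hj
    simp [finsetIndicator, hj] at hij
  simp [finsetIndicator, hst hj]

def upperIndicator (σ : Equiv.Perm (Fin n)) (k : Fin n) : Fin n → M :=
  finsetIndicator ((Ici k).map σ.toEmbedding)

theorem upperIndicator_apply (σ : Equiv.Perm (Fin n)) (k i : Fin n) :
    (upperIndicator σ k i : M) = if k ≤ σ.symm i then ⊤ else ⊥ := by
  simp [upperIndicator, finsetIndicator]

theorem monotone_upperIndicator_comp (σ : Equiv.Perm (Fin n)) (k : Fin n) :
    Monotone ((upperIndicator σ k : Fin n → M) ∘ σ) := by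
  intro a b hab
  simp only [Function.comp, upperIndicator_apply, Equiv.symm_apply_apply]
  split_ifs with ha hb
  exacts [le_rfl, absurd (ha.trans hab) hb, bot_le, le_rfl]

theorem antitone_upperIndicator (σ : Equiv.Perm (Fin n)) :
    Antitone (upperIndicator σ : Fin n → Fin n → M) := by
  intro k l hkl i
  simp only [upperIndicator_apply]
  split_ifs with hl hk
  exacts [le_rfl, absurd (hkl.trans hl) hk, bot_le, le_rfl]

theorem eq_finset_sup_const_inf_upperIndicator {σ : Equiv.Perm (Fin n)} {x : Fin n → M}
    (hx : Monotone (x ∘ σ)) :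
    x = univ.sup fun k => (fun _ => x (σ k)) ⊓ upperIndicator σ k := by
  funext i
  simp only [Finset.sup_apply, Pi.inf_apply, upperIndicator_apply]
  refine le_antisymm (Finset.le_sup_of_le (mem_univ (σ.symm i)) (by simp)) ?_
  refine Finset.sup_le fun k _ => ?_
  split_ifs with hk
  · simpa using hx hk
  · simp

def sortedForm (p : (Fin n → M) → M) (σ : Equiv.Perm (Fin n)) (x : Fin n → M) : M :=
  p ⊥ ⊔ univ.sup fun k => p (upperIndicator σ k) ⊓ x (σ k)

def HasSortedForm (p : (Fin n → M) → M) : Prop :=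
  ∀ (σ : Equiv.Perm (Fin n)) (x : Fin n → M), Monotone (x ∘ σ) → p x = sortedForm p σ x

namespace HasSortedForm

variable {p : (Fin n → M) → M}

theorem apply_le_apply (hp : HasSortedForm p) {σ : Equiv.Perm (Fin n)} {x x' : Fin n → M}
    (hx : Monotone (x ∘ σ)) (hx' : Monotone (x' ∘ σ)) (h : x ≤ x') : p x ≤ p x' := by
  rw [hp σ x hx, hp σ x' hx', sortedForm, sortedForm]
  exact sup_le_sup_left (Finset.sup_mono_fun fun k _ => inf_le_inf_left _ (h (σ k))) _

theorem apply_bot_le (hp : HasSortedForm p) (y : Fin n → M) : p ⊥ ≤ p y :=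
  hp.apply_le_apply monotone_const (Tuple.monotone_sort y) bot_le

theorem antitone_apply_upperIndicator (hp : HasSortedForm p) (σ : Equiv.Perm (Fin n)) :
    Antitone fun k => p (upperIndicator σ k) := fun _ _ hkl =>
  hp.apply_le_apply (monotone_upperIndicator_comp σ _) (monotone_upperIndicator_comp σ _)
    (antitone_upperIndicator σ hkl)

theorem apply_finsetIndicator_mono (hp : HasSortedForm p) {s t : Finset (Fin n)} (hst : s ⊆ t) :
    p (finsetIndicator s) ≤ p (finsetIndicator t) := by
  obtain ⟨σ, hs, ht⟩ := comonotone_finsetIndicator_of_subset (M := M) hst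
  exact hp.apply_le_apply hs ht (finsetIndicator_mono hst)

theorem eq_of_forall_finsetIndicator {q : (Fin n → M) → M} (hp : HasSortedForm p)
    (hq : HasSortedForm q) (h : ∀ s, p (finsetIndicator s) = q (finsetIndicator s)) : p = q := by
  funext x
  rw [hp _ x (Tuple.monotone_sort x), hq _ x (Tuple.monotone_sort x), sortedForm, sortedForm,
    ← finsetIndicator_empty, h]
  simp only [upperIndicator, h]

theorem rangeIdempotent (hp : HasSortedForm p) : RangeIdempotent p := by
  rintro c ⟨_, ⟨y, rfl⟩, _, ⟨z, rfl⟩, hyc, hcz⟩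
  set σ := Tuple.sort z
  rw [hp σ _ monotone_const, sortedForm]
  refine le_antisymm ?_ ?_
  · exact sup_le ((hp.apply_bot_le y).trans hyc) (Finset.sup_le fun k _ => inf_le_right)
  · calc c ≤ p z ⊓ c := le_inf hcz le_rfl
      _ = (p ⊥ ⊔ univ.sup fun k => p (upperIndicator σ k) ⊓ z (σ k)) ⊓ c := by
        rw [hp σ z (Tuple.monotone_sort z), sortedForm]
      _ ≤ p ⊥ ⊔ univ.sup fun k => p (upperIndicator σ k) ⊓ c := by
        rw [inf_sup_right, Finset.sup_inf_distrib_right]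
        exact sup_le_sup inf_le_left
          (Finset.sup_mono_fun fun k _ => inf_le_inf_right _ inf_le_left)

theorem comonotoneMinitive (hp : HasSortedForm p) : ComonotoneMinitive p := by
  rintro x x' ⟨σ, hx, hx'⟩
  rw [hp σ (x ⊓ x') (hx.inf hx'), hp σ x hx, hp σ x' hx']
  exact (sup_finset_sup_inf_sup_finset_sup_of_monotone _ _ _ hx hx').symm

theorem comonotoneMaxitive (hp : HasSortedForm p) : ComonotoneMaxitive p := by
  rintro x x' ⟨σ, hx, hx'⟩
  rw [hp σ (x ⊔ x') (hx.sup hx'), hp σ x hx, hp σ x' hx', sortedForm, sortedForm, sortedForm,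
    ← sup_sup_distrib_left, ← Finset.sup_sup]
  exact congrArg _ (Finset.sup_congr rfl fun k _ => inf_sup_left _ _ _)

theorem sup {q : (Fin n → M) → M} (hp : HasSortedForm p) (hq : HasSortedForm q) :
    HasSortedForm fun x => p x ⊔ q x := by
  intro σ x hx
  dsimp only
  rw [hp σ x hx, hq σ x hx, sortedForm, sortedForm, sup_sup_sup_comm, ← Finset.sup_sup]
  exact congrArg _ (Finset.sup_congr rfl fun k _ => (inf_sup_right _ _ _).symm)

theorem inf {q : (Fin n → M) → M} (hp : HasSortedForm p) (hq : HasSortedForm q) :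
    HasSortedForm fun x => p x ⊓ q x := by
  intro σ x hx
  dsimp only
  rw [hp σ x hx, hq σ x hx]
  exact sup_finset_sup_inf_sup_finset_sup_of_antitone _ (hp.antitone_apply_upperIndicator σ)
    (hq.antitone_apply_upperIndicator σ) (fun _ => hp.apply_bot_le _) fun _ => hq.apply_bot_le _

end HasSortedForm

theorem hasSortedForm_proj (i : Fin n) : HasSortedForm fun x : Fin n → M => x i := by
  intro σ x hx
  conv_lhs => rw [eq_finset_sup_const_inf_upperIndicator hx]
  simp [sortedForm, Finset.sup_apply, inf_comm]

theorem hasSortedForm_const (c : M) : HasSortedForm fun _ : Fin n → M => c :=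
  fun _ _ _ => (sup_eq_left.2 (Finset.sup_le fun _ _ => inf_le_left)).symm

theorem IsLatticePolynomial.hasSortedForm {p : (Fin n → M) → M} (hp : IsLatticePolynomial p) :
    HasSortedForm p := by
  induction hp with
  | proj i => exact hasSortedForm_proj i
  | const c => exact hasSortedForm_const c
  | inf _ _ hq hr => exact hq.inf hr
  | sup _ _ hq hr => exact hq.sup hr

end SortedForm

section Converse

open Finset

variable {n : ℕ} {M : Type*} [LinearOrder M] [BoundedOrder M] {p : (Fin n → M) → M}

theorem ComonotoneMinitive.apply_bot_le (hmin : ComonotoneMinitive p) (y : Fin n → M) :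
    p ⊥ ≤ p y :=
  hmin.apply_le_apply (comonotone_const_left ⊥ y) bot_le

theorem ComonotoneMinitive.apply_le_apply_top (hmin : ComonotoneMinitive p) (y : Fin n → M) :
    p y ≤ p ⊤ :=
  hmin.apply_le_apply (comonotone_const_right y ⊤) le_top

theorem ComonotoneMaxitive.apply_sup_finset_sup (hmax : ComonotoneMaxitive p)
    {σ : Equiv.Perm (Fin n)} {ι : Type*} (s : Finset ι) {b : Fin n → M} {w : ι → Fin n → M}
    (hb : Monotone (b ∘ σ)) (hw : ∀ k ∈ s, Monotone (w k ∘ σ)) :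
    p (b ⊔ s.sup w) = p b ⊔ s.sup fun k => p (w k) := by
  induction s using Finset.cons_induction with
  | empty => simp
  | cons a s _ ih =>
    have hw' : ∀ k ∈ s, Monotone (w k ∘ σ) := fun k hk => hw k (mem_cons_of_mem hk)
    have hsorted : Monotone ((b ⊔ s.sup w) ∘ σ) := fun i j hij =>
      sup_le_sup (hb hij) (by
        simp only [Finset.sup_apply]
        exact Finset.sup_mono_fun fun k hk => hw' k hk hij)
    rw [sup_cons, sup_cons, sup_left_comm, hmax _ _ ⟨σ, hw a (mem_cons_self a s), hsorted⟩,
      ih hw', sup_left_comm]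

theorem apply_const_eq_of_comonotone (hri : RangeIdempotent p) (hmin : ComonotoneMinitive p)
    (hmax : ComonotoneMaxitive p) (c : M) : p (fun _ => c) = p ⊥ ⊔ c ⊓ p ⊤ := by
  have idem (d : M) (h₁ : p ⊥ ≤ d) (h₂ : d ≤ p ⊤) : p (fun _ => d) = d :=
    hri d ⟨_, ⟨⊥, rfl⟩, _, ⟨⊤, rfl⟩, h₁, h₂⟩
  calc p (fun _ => c)
      = p (fun _ => c) ⊓ p (fun _ => p ⊤) := by
        rw [idem _ (hmin.apply_bot_le ⊤) le_rfl, inf_eq_left.2 (hmin.apply_le_apply_top _)]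
    _ = p (fun _ => c ⊓ p ⊤) := (hmin _ _ (comonotone_const_left _ _)).symm
    _ = p (fun _ => p ⊥) ⊔ p (fun _ => c ⊓ p ⊤) := by
        rw [idem _ le_rfl (hmin.apply_le_apply_top ⊥), sup_eq_right.2 (hmin.apply_bot_le _)]
    _ = p (fun _ => p ⊥ ⊔ c ⊓ p ⊤) := (hmax _ _ (comonotone_const_left _ _)).symm
    _ = p ⊥ ⊔ c ⊓ p ⊤ :=
        idem _ le_sup_left (sup_le (hmin.apply_le_apply_top ⊥) inf_le_right)

theorem hasSortedForm_of_comonotone (hri : RangeIdempotent p) (hmin : ComonotoneMinitive p)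
    (hmax : ComonotoneMaxitive p) : HasSortedForm p := by
  intro σ x hx
  set w : Fin n → Fin n → M := fun k => (fun _ => x (σ k)) ⊓ upperIndicator σ k
  have hw (k : Fin n) : p (w k) = p ⊥ ⊔ p (upperIndicator σ k) ⊓ x (σ k) := by
    rw [hmin _ _ (comonotone_const_left _ _), apply_const_eq_of_comonotone hri hmin hmax,
      inf_sup_right, inf_assoc, inf_eq_right.2 (hmin.apply_le_apply_top _),
      inf_eq_left.2 (hmin.apply_bot_le _), inf_comm]
  calc p x = p (⊥ ⊔ univ.sup w) := by rw [bot_sup_eq, ← eq_finset_sup_const_inf_upperIndicator hx]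
    _ = p ⊥ ⊔ univ.sup fun k => p ⊥ ⊔ p (upperIndicator σ k) ⊓ x (σ k) := by
      rw [hmax.apply_sup_finset_sup _ monotone_const
        fun k _ => monotone_const.inf (monotone_upperIndicator_comp σ k)]
      simp only [hw]
    _ = sortedForm p σ x := le_antisymm
      (sup_le le_sup_left (Finset.sup_le fun k hk =>
        sup_le le_sup_left (le_sup_of_le_right (Finset.le_sup_of_le hk le_rfl))))
      (sup_le_sup_left (Finset.sup_mono_fun fun _ _ => le_sup_right) _)

theorem IsLatticePolynomial.finset_sup {ι : Type*} (s : Finset ι)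
    {f : ι → (Fin n → M) → M} (hf : ∀ k ∈ s, IsLatticePolynomial (f k)) :
    IsLatticePolynomial fun x => s.sup fun k => f k x := by
  induction s using Finset.cons_induction with
  | empty => exact .const ⊥
  | cons a s _ ih =>
    simp only [sup_cons]
    exact .sup (hf a (mem_cons_self a s)) (ih fun k hk => hf k (mem_cons_of_mem hk))

theorem IsLatticePolynomial.finset_inf {ι : Type*} (s : Finset ι)
    {f : ι → (Fin n → M) → M} (hf : ∀ k ∈ s, IsLatticePolynomial (f k)) :
    IsLatticePolynomial fun x => s.inf fun k => f k x := by
  induction s using Finset.cons_induction with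
  | empty => exact .const ⊤
  | cons a s _ ih =>
    simp only [inf_cons]
    exact .inf (hf a (mem_cons_self a s)) (ih fun k hk => hf k (mem_cons_of_mem hk))

theorem isLatticePolynomial_polyDNF (p : (Fin n → M) → M) : IsLatticePolynomial (polyDNF p) :=
  .finset_sup _ fun I _ => .inf (.const _) (.finset_inf I fun i _ => .proj i)

theorem HasSortedForm.polyDNF_finsetIndicator (hp : HasSortedForm p) (t : Finset (Fin n)) :
    polyDNF p (finsetIndicator t) = p (finsetIndicator t) := by
  refine le_antisymm (Finset.sup_le fun I _ => ?_) (Finset.le_sup_of_le (mem_univ t) ?_)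
  · by_cases hIt : I ⊆ t
    · exact inf_le_left.trans (hp.apply_finsetIndicator_mono hIt)
    · obtain ⟨i, hiI, hit⟩ := Finset.not_subset.1 hIt
      refine inf_le_right.trans ((Finset.inf_le hiI).trans ?_)
      simp [finsetIndicator, hit]
  · exact le_inf le_rfl (Finset.le_inf fun i hi => by simp [finsetIndicator, hi])

theorem HasSortedForm.isLatticePolynomial (hp : HasSortedForm p) : IsLatticePolynomial p := by
  have hDNF : p = polyDNF p := hp.eq_of_forall_finsetIndicator
    (isLatticePolynomial_polyDNF p).hasSortedForm fun s => (hp.polyDNF_finsetIndicator s).symm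
  exact hDNF ▸ isLatticePolynomial_polyDNF p

end Converse

/-- `p : Lⁿ → L` is a polynomial function iff it is range-idempotent,
comonotonic minitive and comonotonic maxitive. -/
theorem polynomial_iff_comonotonic
    {n : ℕ} {M : Type*} [LinearOrder M] [BoundedOrder M] (p : (Fin n → M) → M) :
    IsLatticePolynomial p ↔
      RangeIdempotent p ∧
      (∀ x x' : Fin n → M, Comonotone x x' →
        p (fun i => x i ⊓ x' i) = p x ⊓ p x') ∧
      (∀ x x' : Fin n → M, Comonotone x x' →
        p (fun i => x i ⊔ x' i) = p x ⊔ p x') := by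
  refine ⟨fun hp => ?_, fun ⟨hri, hmin, hmax⟩ => ?_⟩
  · have hsorted := hp.hasSortedForm
    exact ⟨hsorted.rangeIdempotent, hsorted.comonotoneMinitive, hsorted.comonotoneMaxitive⟩
  · exact (hasSortedForm_of_comonotone hri hmin hmax).isLatticePolynomial
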